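/- Assume the field F is finite. Then every (p+)-filter on E is a strong (p+)-filter. -/

import Mathlib

namespace BlockPaper

variable {F : Type} [Field F]

/-- `X` is an infinite block sequence in `E = ⊕ₙ F`. -/
def IsBlock (X : ℕ → (ℕ →₀ F)) : Prop :=
  (∀ n, X n ≠ 0) ∧ ∀ n, ∀ i ∈ (X n).support, ∀ j ∈ (X (n + 1)).support, i < j

/-- `⟨X⟩`: the linear span of the entries of `X`, with `0` removed. -/
def spanSet (X : ℕ → (ℕ →₀ F)) : Set (ℕ →₀ F) :=
  {v | v ≠ 0 ∧ v ∈ Submodule.span F (Set.range X)}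

/-- `⟨X/n⟩`: the span (minus `0`) of the entries of `X` whose supports lie entirely above `n`. -/
def tailSpanSet (X : ℕ → (ℕ →₀ F)) (n : ℕ) : Set (ℕ →₀ F) :=
  {v | v ≠ 0 ∧ v ∈ Submodule.span F {x : ℕ →₀ F | (∃ k, X k = x) ∧ ∀ i ∈ x.support, n < i}}

/-- `X ⪯ Y`. -/
def PLE (X Y : ℕ → (ℕ →₀ F)) : Prop := spanSet X ⊆ spanSet Y

/-- `X ⪯* Y`. -/
def PLEs (X Y : ℕ → (ℕ →₀ F)) : Prop := ∃ n, tailSpanSet X n ⊆ spanSet Y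

/-- A block filter on `E`: a proper filter of subsets of `E ∖ {0}` containing all
finite-codimensional subspaces (minus `0`) and with a base of sets `⟨X⟩`, `X ∈ E^[∞]`. -/
structure BlockFilter (F : Type) [Field F] where
  sets : Set (Set (ℕ →₀ F))
  nonzero : ∀ S ∈ sets, ∀ v ∈ S, v ≠ 0
  proper : ∅ ∉ sets
  upward : ∀ S ∈ sets, ∀ T : Set (ℕ →₀ F), (∀ v ∈ T, v ≠ 0) → S ⊆ T → T ∈ sets
  inter : ∀ S ∈ sets, ∀ T ∈ sets, S ∩ T ∈ sets
  codim : ∀ V : Submodule F (ℕ →₀ F), Module.Finite F ((ℕ →₀ F) ⧸ V) →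
    {v : ℕ →₀ F | v ≠ 0 ∧ v ∈ V} ∈ sets
  blockBase : ∀ S ∈ sets, ∃ X : ℕ → (ℕ →₀ F),
    IsBlock X ∧ spanSet X ∈ sets ∧ spanSet X ⊆ S

/-- `D ⊆ E` is `𝓕`-dense. -/
def FDense (𝓕 : BlockFilter F) (D : Set (ℕ →₀ F)) : Prop :=
  ∀ X : ℕ → (ℕ →₀ F), IsBlock X → spanSet X ∈ 𝓕.sets →
    ∃ V : Submodule F (ℕ →₀ F), ¬ Module.Finite F V ∧
      (V : Set (ℕ →₀ F)) \ {0} ⊆ spanSet X ∩ D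

/-- `𝓕` is full: every `𝓕`-dense set belongs to `𝓕`. -/
def Full (𝓕 : BlockFilter F) : Prop :=
  ∀ D : Set (ℕ →₀ F), FDense 𝓕 D → D \ {0} ∈ 𝓕.sets

/-- `𝓕` is a `(p)`-filter. -/
def PFilter (𝓕 : BlockFilter F) : Prop :=
  ∀ Xs : ℕ → ℕ → (ℕ →₀ F), (∀ n, IsBlock (Xs n) ∧ spanSet (Xs n) ∈ 𝓕.sets) →
    ∃ X : ℕ → (ℕ →₀ F), IsBlock X ∧ spanSet X ∈ 𝓕.sets ∧ ∀ n, PLEs X (Xs n)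

/-- `𝓕` is a `(p⁺)`-filter: full and a `(p)`-filter. -/
def PPlus (𝓕 : BlockFilter F) : Prop := Full 𝓕 ∧ PFilter 𝓕

/-- A finite block sequence in `E`, as a list. -/
def IsBlockList (l : List (ℕ →₀ F)) : Prop :=
  (∀ v ∈ l, v ≠ 0) ∧
    l.Chain' (fun u v : ℕ →₀ F => ∀ i ∈ u.support, ∀ j ∈ v.support, i < j)

/-- `𝓕` is a strong `(p)`-filter: any family `(X_x⃗)` indexed by finite block sequences,
with each `⟨X_x⃗⟩ ∈ 𝓕`, has a diagonalization `X` with `X/x⃗ ⪯ X_x⃗` for all finite initial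
segments `x⃗` of `X`. -/
def StrongP (𝓕 : BlockFilter F) : Prop :=
  ∀ Xs : List (ℕ →₀ F) → ℕ → (ℕ →₀ F),
    (∀ l, IsBlockList l → IsBlock (Xs l) ∧ spanSet (Xs l) ∈ 𝓕.sets) →
    ∃ X : ℕ → (ℕ →₀ F), IsBlock X ∧ spanSet X ∈ 𝓕.sets ∧
      ∀ k : ℕ, PLE (fun m => X (m + k)) (Xs (List.ofFn fun i : Fin k => X i))

/-- The outcome of a strategy (for II) against a sequence of opposing moves:
the `k`-th value is the strategy applied to the first `k+1` opposing moves. -/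
def outcomeOf {α β : Type*} (st : List α → β) (Ys : ℕ → α) : ℕ → β :=
  fun k => st (List.ofFn fun i : Fin (k + 1) => Ys i)

/-- A legal move for player I in the Gowers game `G[X]`. -/
def LegalG (X Y : ℕ → (ℕ →₀ F)) : Prop := IsBlock Y ∧ PLE Y X

/-- A legal move for player I in the restricted Gowers game `G_𝓕[X]`. -/
def LegalGF (𝓕 : BlockFilter F) (X Y : ℕ → (ℕ →₀ F)) : Prop :=
  IsBlock Y ∧ PLE Y X ∧ spanSet Y ∈ 𝓕.sets

/-- `α` is a strategy for player II in a Gowers-type game whose legal moves for I are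
given by `legal`: against any sequence of legal I-moves, the outcome is a block
sequence whose `k`-th entry lies in the span of I's `k`-th move. -/
def IsStratII (legal : (ℕ → (ℕ →₀ F)) → Prop)
    (α : List (ℕ → (ℕ →₀ F)) → (ℕ →₀ F)) : Prop :=
  ∀ Ys : ℕ → ℕ → (ℕ →₀ F), (∀ k, legal (Ys k)) →
    IsBlock (outcomeOf α Ys) ∧ ∀ k, outcomeOf α Ys k ∈ spanSet (Ys k)

/-- `𝓕` is strategic. -/
def Strategic (𝓕 : BlockFilter F) : Prop :=
  ∀ X : ℕ → (ℕ →₀ F), IsBlock X → spanSet X ∈ 𝓕.sets →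
    ∀ α, IsStratII (LegalG X) α →
      ∃ Ys : ℕ → ℕ → (ℕ →₀ F), (∀ k, LegalG X (Ys k)) ∧
        spanSet (outcomeOf α Ys) ∈ 𝓕.sets

/-- `𝓕` is `+`-strategic. -/
def PlusStrategic (𝓕 : BlockFilter F) : Prop :=
  ∀ X : ℕ → (ℕ →₀ F), IsBlock X → spanSet X ∈ 𝓕.sets →
    ∀ α, IsStratII (LegalGF 𝓕 X) α →
      ∃ Ys : ℕ → ℕ → (ℕ →₀ F), (∀ k, LegalGF 𝓕 X (Ys k)) ∧
        spanSet (outcomeOf α Ys) ∈ 𝓕.sets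

/-- A legal finite position (list of II's moves so far) in a play where I follows `σ`. -/
def LegalPos (σ : List (ℕ →₀ F) → ℕ → (ℕ →₀ F)) (l : List (ℕ →₀ F)) : Prop :=
  IsBlockList l ∧ ∀ k, (h : k < l.length) → l.get ⟨k, h⟩ ∈ spanSet (σ (l.take k))

/-- `σ` is a strategy for player I in the restricted Gowers game `G_𝓕[X]`. -/
def IsStratIGF (𝓕 : BlockFilter F) (X : ℕ → (ℕ →₀ F))
    (σ : List (ℕ →₀ F) → ℕ → (ℕ →₀ F)) : Prop :=
  ∀ l, LegalPos σ l → LegalGF 𝓕 X (σ l)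

/-- `ys` is (the sequence of II's moves of) an infinite play against I's strategy `σ`
in a Gowers-type game; its outcome is `ys` itself. -/
def PlayAgainstI (σ : List (ℕ →₀ F) → ℕ → (ℕ →₀ F)) (ys : ℕ → (ℕ →₀ F)) : Prop :=
  IsBlock ys ∧ ∀ k, ys k ∈ spanSet (σ (List.ofFn fun i : Fin k => ys i))

/-- `ys` is an infinite play against I's strategy `σ` in the asymptotic game `F[X]`. -/
def PlayAgainstIAsymp (X : ℕ → (ℕ →₀ F)) (σ : List (ℕ →₀ F) → ℕ)
    (ys : ℕ → (ℕ →₀ F)) : Prop :=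
  IsBlock ys ∧ ∀ k, ys k ∈ spanSet X ∧
    ∀ i ∈ (ys k).support, σ (List.ofFn fun j : Fin k => ys j) < i

/-- `FIN`: nonempty finite subsets of `ℕ`. -/
abbrev FIN := {s : Finset ℕ // s.Nonempty}

/-- An infinite block sequence in `FIN`. -/
def IsBlockF (A : ℕ → Finset ℕ) : Prop :=
  (∀ n, (A n).Nonempty) ∧ ∀ n, ∀ i ∈ A n, ∀ j ∈ A (n + 1), i < j

/-- `⟨A⟩`: unions of finitely many (at least one) entries of `A`. -/
def finUnions (A : ℕ → Finset ℕ) : Set (Finset ℕ) :=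
  {b | ∃ G : Finset ℕ, G.Nonempty ∧ b = G.sup A}

/-- `⟨A/n⟩`: unions of finitely many entries of `A` contained in `(n, ∞)`. -/
def finUnionsAbove (A : ℕ → Finset ℕ) (n : ℕ) : Set (Finset ℕ) :=
  {b | ∃ G : Finset ℕ, G.Nonempty ∧ (∀ k ∈ G, ∀ i ∈ A k, n < i) ∧ b = G.sup A}

/-- `A ⪯ B` in `FIN`. -/
def PLEF (A B : ℕ → Finset ℕ) : Prop := finUnions A ⊆ finUnions B

/-- `A ⪯* B` in `FIN`. -/
def PLEsF (A B : ℕ → Finset ℕ) : Prop := ∃ n, finUnionsAbove A n ⊆ finUnions B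

/-- Lift a set of finite subsets of `ℕ` to a set of elements of `FIN`. -/
def liftFIN (S : Set (Finset ℕ)) : Set FIN := {a | (a : Finset ℕ) ∈ S}

/-- `U` is an ordered-union ultrafilter on `FIN`. -/
def OrderedUnion (U : Ultrafilter FIN) : Prop :=
  ∀ S ∈ U, ∃ A : ℕ → Finset ℕ, IsBlockF A ∧
    liftFIN (finUnions A) ∈ U ∧ liftFIN (finUnions A) ⊆ S

/-- `U` is stable. -/
def Stable (U : Ultrafilter FIN) : Prop :=
  ∀ As : ℕ → ℕ → Finset ℕ, (∀ n, IsBlockF (As n) ∧ liftFIN (finUnions (As n)) ∈ U) →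
    ∃ B : ℕ → Finset ℕ, IsBlockF B ∧ liftFIN (finUnions B) ∈ U ∧ ∀ n, PLEsF B (As n)

/-- `supp(X)`: the sequence of supports of the entries of `X`. -/
def suppSeq (X : ℕ → (ℕ →₀ F)) : ℕ → Finset ℕ := fun k => (X k).support

/-- `supp(𝓕)`: the collection of `A ⊆ FIN` containing `{supp v : v ∈ S}` for some `S ∈ 𝓕`. -/
def suppFilter (𝓕 : BlockFilter F) : Set (Set FIN) :=
  {A | ∃ S ∈ 𝓕.sets, ∀ a : FIN, (∃ v ∈ S, (a : Finset ℕ) = v.support) → a ∈ A}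

/-- A finite block sequence in `FIN`, as a list. -/
def IsBlockListF (l : List (Finset ℕ)) : Prop :=
  (∀ a ∈ l, a.Nonempty) ∧
    l.Chain' (fun a b : Finset ℕ => ∀ i ∈ a, ∀ j ∈ b, i < j)

end BlockPaper

/-!
Diagonalise the countably many `⟨X_x⃗⟩` by the (p)-property to one `T` with
`T/μ(x⃗) ⪯ X_x⃗`. As `F` is finite, only finitely many finite block sequences are supported
below `b`, so a monotone `f ≥ id` dominates `μ` on all of them. Call a gap between consecutive
points `i < j` of a support big when `f i < j`. The vectors with an odd number of big gaps form
an `𝓕`-dense set, so by fullness some `⟨X⟩ ∈ 𝓕` below `⟨T⟩ ∩ ⟨X_∅⟩` consists of such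
vectors. Since `x_n`, `x_{n+1}` and `x_n + x_{n+1}` all have an odd count, the gap between
consecutive entries of `X` is big, and hence `X/x⃗ ⪯ T/μ(x⃗) ⪯ X_x⃗`.
-/

namespace BlockPaper

def bigGapCount (f : ℕ → ℕ) : List ℕ → ℕ
  | a :: b :: l => (if f a < b then 1 else 0) + bigGapCount f (b :: l)
  | _ => 0

lemma bigGapCount_append (f : ℕ → ℕ) :
    ∀ (l₁ l₂ : List ℕ) (h₁ : l₁ ≠ []) (h₂ : l₂ ≠ []),
      bigGapCount f (l₁ ++ l₂) = bigGapCount f l₁ + bigGapCount f l₂ +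
        if f (l₁.getLast h₁) < l₂.head h₂ then 1 else 0
  | [a], b :: l₂, _, _ => by
    show _ + _ = 0 + _ + _
    rw [zero_add, add_comm]
    rfl
  | a :: b :: l₁, l₂, _, h₂ => by
    simp only [List.cons_append, bigGapCount]
    rw [← List.cons_append, bigGapCount_append f (b :: l₁) l₂ (List.cons_ne_nil _ _) h₂,
      List.getLast_cons (List.cons_ne_nil _ _)]
    ring

lemma sort_union_of_forall_lt {s t : Finset ℕ} (h : ∀ i ∈ s, ∀ j ∈ t, i < j) :
    (s ∪ t).sort = s.sort ++ t.sort := by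
  refine List.Perm.eq_of_pairwise' (Finset.pairwise_sort _ _) ?_ ?_
  · refine List.pairwise_append.2 ⟨Finset.pairwise_sort _ _, Finset.pairwise_sort _ _, ?_⟩
    intro i hi j hj
    exact (h i (Finset.mem_sort _ |>.1 hi) j (Finset.mem_sort _ |>.1 hj)).le
  · have hd : Disjoint s t := Finset.disjoint_left.2 fun i hs ht => (h i hs i ht).false
    rw [← Multiset.coe_eq_coe, ← Multiset.coe_add, Finset.sort_eq, Finset.sort_eq,
      Finset.sort_eq, ← Finset.disjUnion_eq_union s t hd]
    rfl

def gapCount (f : ℕ → ℕ) (s : Finset ℕ) : ℕ := bigGapCount f s.sort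

lemma gapCount_union (f : ℕ → ℕ) {s t : Finset ℕ} (hs : s.Nonempty) (ht : t.Nonempty)
    (hst : ∀ i ∈ s, ∀ j ∈ t, i < j) :
    gapCount f (s ∪ t) = gapCount f s + gapCount f t +
      if f (s.max' hs) < t.min' ht then 1 else 0 := by
  have hs' : s.sort ≠ [] := by
    rw [← List.length_pos_iff, Finset.length_sort]; exact hs.card_pos
  have ht' : t.sort ≠ [] := by
    rw [← List.length_pos_iff, Finset.length_sort]; exact ht.card_pos
  rw [gapCount, sort_union_of_forall_lt hst, bigGapCount_append f _ _ hs' ht',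
    List.getLast_eq_getElem, List.head_eq_getElem, Finset.max'_eq_sorted_last,
    Finset.min'_eq_sorted_zero]
  rfl

lemma nonempty_of_odd_gapCount {f : ℕ → ℕ} {s : Finset ℕ} (h : Odd (gapCount f s)) :
    s.Nonempty := by
  rw [Finset.nonempty_iff_ne_empty]
  rintro rfl
  simp [gapCount, bigGapCount] at h

def Separated (f : ℕ → ℕ) (A : ℕ → Finset ℕ) : Prop :=
  ∀ n, ∀ i ∈ A n, ∀ j ∈ A (n + 1), f i < j

section Separated

variable {f : ℕ → ℕ} {A : ℕ → Finset ℕ}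

lemma Separated.lt_of_lt (hf : ∀ n, n ≤ f n) (hA : ∀ n, (A n).Nonempty) (h : Separated f A)
    {m n : ℕ} (hmn : m < n) : ∀ i ∈ A m, ∀ j ∈ A n, f i < j := by
  induction n, hmn using Nat.le_induction with
  | base => exact h m
  | succ n _ ih =>
    intro i hi j hj
    obtain ⟨k, hk⟩ := hA n
    exact (ih i hi k hk).trans_le ((hf k).trans (h n k hk j hj).le)

lemma Separated.le_of_mem (hf : ∀ n, n ≤ f n) (hA : ∀ n, (A n).Nonempty) (h : Separated f A) :
    ∀ {n i : ℕ}, i ∈ A n → n ≤ i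
  | 0, _, _ => Nat.zero_le _
  | n + 1, i, hi => by
    obtain ⟨k, hk⟩ := hA n
    exact ((h.le_of_mem hf hA hk).trans (hf k)).trans_lt (h n k hk i hi)

lemma Separated.odd_gapCount_biUnion (hf : ∀ n, n ≤ f n) (hA : ∀ n, (A n).Nonempty)
    (h : Separated f A) (hodd : ∀ n, Odd (gapCount f (A n))) {s : Finset ℕ}
    (hs : s.Nonempty) : Odd (gapCount f (s.biUnion A)) := by
  induction s using Finset.induction_on_max with
  | empty => exact absurd hs Finset.not_nonempty_empty
  | insert a s hlt ih =>
    rcases s.eq_empty_or_nonempty with rfl | hs'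
    · simpa using hodd a
    have hU : (s.biUnion A).Nonempty := hs'.biUnion fun t _ => hA t
    have hfar : ∀ i ∈ s.biUnion A, ∀ j ∈ A a, f i < j := by
      intro i hi j hj
      obtain ⟨t, ht, hit⟩ := Finset.mem_biUnion.1 hi
      exact h.lt_of_lt hf hA (hlt t ht) i hit j hj
    rw [Finset.biUnion_insert, Finset.union_comm,
      gapCount_union f hU (hA a) fun i hi j hj => (hf i).trans_lt (hfar i hi j hj),
      if_pos (hfar _ (Finset.max'_mem _ _) _ (Finset.min'_mem _ _))]
    exact ((ih hs').add_odd (hodd a)).add_one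

end Separated

variable {F : Type} [Field F]

section Block

open Submodule

variable {X : ℕ → ℕ →₀ F}

lemma IsBlock.support_nonempty (hX : IsBlock X) (n : ℕ) : (X n).support.Nonempty :=
  Finsupp.support_nonempty_iff.2 (hX.1 n)

lemma IsBlock.separated (hX : IsBlock X) : Separated id (suppSeq X) := hX.2

lemma IsBlock.lt_of_lt (hX : IsBlock X) {m n : ℕ} (hmn : m < n) :
    ∀ i ∈ (X m).support, ∀ j ∈ (X n).support, i < j :=
  hX.separated.lt_of_lt (fun _ => le_rfl) hX.support_nonempty hmn

lemma IsBlock.le_of_mem (hX : IsBlock X) {n i : ℕ} (hi : i ∈ (X n).support) : n ≤ i :=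
  hX.separated.le_of_mem (fun _ => le_rfl) hX.support_nonempty hi

lemma IsBlock.disjoint_support (hX : IsBlock X) {m n : ℕ} (hmn : m ≠ n) :
    Disjoint (X m).support (X n).support := by
  rw [Finset.disjoint_left]
  intro i hm hn
  rcases hmn.lt_or_gt with h | h
  · exact (hX.lt_of_lt h i hm i hn).false
  · exact (hX.lt_of_lt h i hn i hm).false

lemma IsBlock.support_linearCombination (hX : IsBlock X) (c : ℕ →₀ F) :
    (Finsupp.linearCombination F X c).support = c.support.biUnion (suppSeq X) := by
  rw [Finsupp.linearCombination_apply, Finsupp.sum, Finsupp.support_sum_eq_biUnion]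
  · exact Finset.biUnion_congr rfl fun t ht =>
      Finsupp.support_smul_eq (Finsupp.mem_support_iff.1 ht)
  · exact fun m n hmn =>
      (hX.disjoint_support hmn).mono Finsupp.support_smul Finsupp.support_smul

lemma IsBlock.linearIndependent (hX : IsBlock X) : LinearIndependent F X := by
  rw [linearIndependent_iff]
  intro c hc
  by_contra hc0
  have hsupp := hX.support_linearCombination c
  rw [hc, Finsupp.support_zero] at hsupp
  exact Finset.not_nonempty_empty (hsupp ▸
    (Finsupp.support_nonempty_iff.2 hc0).biUnion fun t _ => hX.support_nonempty t)

lemma IsBlock.not_finite_span (hX : IsBlock X) : ¬ Module.Finite F (span F (Set.range X)) := by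
  intro _
  exact Module.Finite.not_linearIndependent_of_infinite _
    (linearIndependent_span hX.linearIndependent)

lemma IsBlock.exists_support_eq_biUnion (hX : IsBlock X) {v : ℕ →₀ F}
    (hv : v ∈ span F (Set.range X)) : ∃ s : Finset ℕ, v.support = s.biUnion (suppSeq X) := by
  rw [← Finsupp.range_linearCombination] at hv
  obtain ⟨c, rfl⟩ := hv
  exact ⟨c.support, hX.support_linearCombination c⟩

lemma IsBlock.mem_span_tail (hX : IsBlock X) {v : ℕ →₀ F} {n : ℕ}
    (hv : v ∈ span F (Set.range X)) (hvn : ∀ i ∈ v.support, n < i) :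
    v ∈ span F {x | (∃ k, X k = x) ∧ ∀ i ∈ x.support, n < i} := by
  rw [← Finsupp.range_linearCombination] at hv
  obtain ⟨c, rfl⟩ := hv
  have hsupp := hX.support_linearCombination c
  rw [Finsupp.linearCombination_apply]
  refine sum_mem fun t ht => smul_mem _ _ (subset_span ⟨⟨t, rfl⟩, fun i hi => hvn i ?_⟩)
  rw [hsupp]
  exact Finset.mem_biUnion.2 ⟨t, ht, hi⟩

lemma IsBlock.mem_spanSet (hX : IsBlock X) (n : ℕ) : X n ∈ spanSet X :=
  ⟨hX.1 n, subset_span ⟨n, rfl⟩⟩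

lemma ple_of_forall_mem {Y : ℕ → ℕ →₀ F} (h : ∀ n, X n ∈ spanSet Y) : PLE X Y :=
  fun _ hv => ⟨hv.1, span_le.2 (Set.range_subset_iff.2 fun n => (h n).2) hv.2⟩

lemma IsBlock.gapCount_add (hX : IsBlock X) (f : ℕ → ℕ) {m n : ℕ} (hmn : m < n) :
    gapCount f (X m + X n).support = gapCount f (X m).support + gapCount f (X n).support +
      if f ((X m).support.max' (hX.support_nonempty m)) <
        (X n).support.min' (hX.support_nonempty n) then 1 else 0 := by
  rw [Finsupp.support_add_eq (hX.disjoint_support hmn.ne)]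
  exact gapCount_union f _ _ (hX.lt_of_lt hmn)

lemma isBlockList_ofFn (hX : IsBlock X) (k : ℕ) :
    IsBlockList (List.ofFn fun i : Fin k => X i) := by
  refine ⟨fun v hv => ?_, List.isChain_iff_getElem.2 fun i _ => ?_⟩
  · obtain ⟨i, rfl⟩ := List.mem_ofFn.1 hv
    exact hX.1 i
  · simpa only [List.getElem_ofFn] using hX.2 i

lemma IsBlock.exists_bound_ofFn (hX : IsBlock X) (k : ℕ) :
    ∃ b ∈ (X k).support, (List.ofFn fun i : Fin (k + 1) => X i).length ≤ b + 1 ∧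
      ∀ v ∈ List.ofFn (fun i : Fin (k + 1) => X i), ∀ i ∈ v.support, i ≤ b := by
  refine ⟨_, Finset.max'_mem _ (hX.support_nonempty k), ?_, fun v hv i hi => ?_⟩
  · rw [List.length_ofFn]
    exact Nat.succ_le_succ (hX.le_of_mem (Finset.max'_mem _ _))
  · obtain ⟨j, rfl⟩ := List.mem_ofFn.1 hv
    rcases (Nat.lt_succ_iff.1 j.2).lt_or_eq with hj | hj
    · exact (hX.lt_of_lt hj i hi _ (Finset.max'_mem _ _)).le
    · exact Finset.le_max' _ _ (hj ▸ hi)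

end Block

lemma exists_seq_separated {α : Type*} (S : α → Finset ℕ) (P : α → Prop) (f : ℕ → ℕ)
    (h : ∀ B, ∃ x, P x ∧ ∀ i ∈ S x, B < i) :
    ∃ g : ℕ → α, (∀ n, P (g n)) ∧ Separated f (S ∘ g) := by
  choose W hWP hWS using h
  refine ⟨fun n => Nat.rec (W 0) (fun _ x => W ((S x).sup f)) n,
    fun n => by cases n <;> exact hWP _, fun n i hi j hj => ?_⟩
  exact (Finset.le_sup hi).trans_lt (hWS _ j hj)

section OddGaps

open Submodule

variable {f : ℕ → ℕ}

def oddGapSet (f : ℕ → ℕ) : Set (ℕ →₀ F) := {v | Odd (gapCount f v.support)}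

lemma IsBlock.exists_odd_gapCount_above (hf : ∀ n, n ≤ f n) {Z : ℕ → ℕ →₀ F} (hZ : IsBlock Z)
    (B : ℕ) : ∃ w ∈ span F (Set.range Z), Odd (gapCount f w.support) ∧ ∀ i ∈ w.support, B < i := by
  by_cases hI : ∃ n, B < n ∧ Odd (gapCount f (Z n).support)
  · obtain ⟨n, hBn, hodd⟩ := hI
    exact ⟨Z n, subset_span ⟨n, rfl⟩, hodd, fun i hi => hBn.trans_le (hZ.le_of_mem hi)⟩
  push Not at hI
  -- if almost all entries have an even count, join two of them across a big gap
  set a := B + 1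
  set M := (Z a).support.max' (hZ.support_nonempty a)
  set b := f M + 1
  have hab : a < b := (hZ.le_of_mem (Finset.max'_mem _ _)).trans_lt (Nat.lt_succ_of_le (hf M))
  refine ⟨Z a + Z b, add_mem (subset_span ⟨a, rfl⟩) (subset_span ⟨b, rfl⟩), ?_, ?_⟩
  · rw [hZ.gapCount_add f hab,
      if_pos ((Nat.lt_succ_self _).trans_le (hZ.le_of_mem (Finset.min'_mem _ _)))]
    exact ((Nat.not_odd_iff_even.1 (hI a (Nat.lt_succ_self B))).add
      (Nat.not_odd_iff_even.1 (hI b (Nat.lt_succ_self B |>.trans hab)))).add_one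
  · intro i hi
    rw [Finsupp.support_add_eq (hZ.disjoint_support hab.ne), Finset.mem_union] at hi
    rcases hi with hi | hi
    · exact Nat.lt_of_succ_le (hZ.le_of_mem hi)
    · exact (Nat.lt_succ_self B |>.trans hab).trans_le (hZ.le_of_mem hi)

lemma fDense_oddGapSet (𝓕 : BlockFilter F) (hf : ∀ n, n ≤ f n) : FDense 𝓕 (oddGapSet f) := by
  intro Z hZ _
  obtain ⟨g, hg, hsep⟩ := exists_seq_separated (fun w : ℕ →₀ F => w.support)
    (fun w => w ∈ span F (Set.range Z) ∧ Odd (gapCount f w.support)) f fun B => by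
      obtain ⟨w, hw, hodd, hB⟩ := hZ.exists_odd_gapCount_above hf B
      exact ⟨w, ⟨hw, hodd⟩, hB⟩
  have hne : ∀ n, (g n).support.Nonempty := fun n => nonempty_of_odd_gapCount (hg n).2
  have hgB : IsBlock g := ⟨fun n => Finsupp.support_nonempty_iff.1 (hne n),
    fun n i hi j hj => (hf i).trans_lt (hsep n i hi j hj)⟩
  refine ⟨span F (Set.range g), hgB.not_finite_span, ?_⟩
  rintro v ⟨hv, hv0 : v ≠ 0⟩
  refine ⟨⟨hv0, span_le.2 (Set.range_subset_iff.2 fun n => (hg n).1) hv⟩, ?_⟩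
  obtain ⟨s, hs⟩ := hgB.exists_support_eq_biUnion hv
  obtain ⟨t, ht, -⟩ := Finset.biUnion_nonempty.1 (hs ▸ Finsupp.support_nonempty_iff.2 hv0)
  show Odd (gapCount f v.support)
  rw [hs]
  exact hsep.odd_gapCount_biUnion hf hne (fun n => (hg n).2) ⟨t, ht⟩

lemma IsBlock.separated_of_spanSet_subset (hf : Monotone f) {X : ℕ → ℕ →₀ F} (hX : IsBlock X)
    (h : spanSet X ⊆ oddGapSet f) : Separated f (suppSeq X) := by
  intro n i hi j hj
  have hsum : X n + X (n + 1) ∈ spanSet X := by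
    refine ⟨fun h0 => ?_, add_mem (hX.mem_spanSet n).2 (hX.mem_spanSet (n + 1)).2⟩
    have hU := Finsupp.support_add_eq (hX.disjoint_support (Nat.lt_succ_self n).ne)
    rw [h0, Finsupp.support_zero, eq_comm, Finset.union_eq_empty] at hU
    exact (hX.support_nonempty n).ne_empty hU.1
  have hodd : Odd (gapCount f (X n + X (n + 1)).support) := h hsum
  rw [hX.gapCount_add f (Nat.lt_succ_self n)] at hodd
  by_cases hgap : f ((X n).support.max' (hX.support_nonempty n)) <
      (X (n + 1)).support.min' (hX.support_nonempty (n + 1))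
  · exact (hf (Finset.le_max' _ _ hi)).trans_lt (hgap.trans_le (Finset.min'_le _ _ hj))
  · rw [if_neg hgap, add_zero] at hodd
    exact absurd ((h (hX.mem_spanSet n)).add_odd (h (hX.mem_spanSet (n + 1))))
      (Nat.not_even_iff_odd.2 hodd)

end OddGaps

lemma PFilter.exists_forall_PLEs {𝓕 : BlockFilter F} (hP : PFilter 𝓕) {ι : Type*} [Countable ι]
    [Nonempty ι] (Xs : ι → ℕ → ℕ →₀ F) (hXs : ∀ i, IsBlock (Xs i) ∧ spanSet (Xs i) ∈ 𝓕.sets) :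
    ∃ T, IsBlock T ∧ spanSet T ∈ 𝓕.sets ∧ ∀ i, PLEs T (Xs i) := by
  obtain ⟨e, he⟩ := exists_surjective_nat ι
  obtain ⟨T, hT, hT𝓕, hle⟩ := hP (Xs ∘ e) fun n => hXs (e n)
  refine ⟨T, hT, hT𝓕, fun i => ?_⟩
  obtain ⟨n, rfl⟩ := he i
  exact hle n

lemma exists_monotone_bound {ι : Type*} (μ : ι → ℕ) (S : ℕ → Set ι) (hS : ∀ b, (S b).Finite) :
    ∃ f : ℕ → ℕ, Monotone f ∧ (∀ n, n ≤ f n) ∧ ∀ b, ∀ x ∈ S b, μ x ≤ f b := by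
  set g : ℕ → ℕ := fun b => b + (hS b).toFinset.sup μ
  have hg : ∀ b, g b ≤ (Finset.range (b + 1)).sup g :=
    fun b => Finset.le_sup (Finset.self_mem_range_succ b)
  refine ⟨fun n => (Finset.range (n + 1)).sup g,
    fun m n hmn => Finset.sup_mono (Finset.range_subset_range.2 (Nat.succ_le_succ hmn)),
    fun n => (Nat.le_add_right _ _).trans (hg n), fun b x hx => ?_⟩
  exact ((Finset.le_sup ((hS b).mem_toFinset.2 hx)).trans (Nat.le_add_left _ _)).trans (hg b)

lemma finite_setOf_length_le_support_le [Finite F] (b : ℕ) :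
    {l : List (ℕ →₀ F) | l.length ≤ b + 1 ∧ ∀ v ∈ l, ∀ i ∈ v.support, i ≤ b}.Finite := by
  let V := {v : ℕ →₀ F // ↑v.support ⊆ Set.Iic b}
  have : Finite (Set.Iic b →₀ F) := Finite.of_equiv _ Finsupp.equivFunOnFinite.symm
  have : Finite V := Finite.of_equiv _ (Finsupp.restrictSupportEquiv (Set.Iic b) F).symm
  refine ((List.finite_length_le V (b + 1)).image (List.map Subtype.val)).subset ?_
  rintro l ⟨hlen, hl⟩
  lift l to List V using fun v hv => hl v hv
  exact ⟨l, (by simpa using hlen : l.length ≤ b + 1), rfl⟩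

theorem PPlus.strongP [Finite F] {𝓕 : BlockFilter F} (h : PPlus 𝓕) : StrongP 𝓕 := by
  obtain ⟨hFull, hP⟩ := h
  intro Xs hXs
  have hnil : IsBlockList ([] : List (ℕ →₀ F)) := ⟨by simp, List.isChain_nil⟩
  have : Nonempty {l // IsBlockList l} := ⟨⟨[], hnil⟩⟩
  obtain ⟨T, hT, hT𝓕, hTXs⟩ :=
    hP.exists_forall_PLEs (fun l : {l // IsBlockList l} => Xs l.1) fun l => hXs l.1 l.2
  choose μ hμ using hTXs
  obtain ⟨f, hfm, hf, hμf⟩ := exists_monotone_bound μ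
    (fun b => Subtype.val ⁻¹' {l | l.length ≤ b + 1 ∧ ∀ v ∈ l, ∀ i ∈ v.support, i ≤ b})
    fun b => (finite_setOf_length_le_support_le b).preimage Subtype.val_injective.injOn
  have hD : oddGapSet f \ {0} ∈ 𝓕.sets := hFull _ (fDense_oddGapSet 𝓕 hf)
  obtain ⟨X, hX, hX𝓕, hXsub⟩ :=
    𝓕.blockBase _ (𝓕.inter _ (𝓕.inter _ hD _ hT𝓕) _ (hXs [] hnil).2)
  have hsep := hX.separated_of_spanSet_subset hfm fun v hv => (hXsub hv).1.1.1
  refine ⟨X, hX, hX𝓕, fun k => ple_of_forall_mem fun m => ?_⟩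
  cases k with
  | zero =>
    rw [List.ofFn_zero]
    exact (hXsub (hX.mem_spanSet m)).2
  | succ k =>
    obtain ⟨b, hb, hlen, hsupp⟩ := hX.exists_bound_ofFn k
    refine hμ ⟨_, isBlockList_ofFn hX (k + 1)⟩
      ⟨hX.1 _, hT.mem_span_tail (hXsub (hX.mem_spanSet _)).1.2.2 fun i hi => ?_⟩
    exact (hμf b _ ⟨hlen, hsupp⟩).trans_lt
      (hsep.lt_of_lt hf hX.support_nonempty (by omega : k < m + (k + 1)) b hb i hi)

end BlockPaper

open BlockPaper in
/-- If the field `F` is finite, every `(p⁺)`-filter on `E` is a strong `(p⁺)`-filter. -/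
theorem stmt16 {F : Type} [Field F] [Finite F] (𝓕 : BlockFilter F)
    (h : PPlus 𝓕) : Full 𝓕 ∧ StrongP 𝓕 :=
  ⟨h.1, h.strongP⟩
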